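/- arXiv:2311.17568 — 8 statements merged into one kernel-verified Lean document; each statement's English description precedes it below -/
import Mathlib

section
/- Let n ≥ 1 and fix β > 0 and α₁ ≥ α₂ ≥ … ≥ αₙ > 0. Suppose p, p* ∈ (0,∞)ⁿ satisfy p₁ ≤ p₂ ≤ … ≤ pₙ, p*₁ ≤ p*₂ ≤ … ≤ p*ₙ, and p* is weakly submajorized by p (i.e., Σ_{j=i}^n p*ⱼ ≤ Σ_{j=i}^n pⱼ after sorting increasingly, for all i). Then for every x > 0, Σᵢ p*ᵢ (1 - (1 - (1+x)^{-αᵢ})^β) ≤ Σᵢ pᵢ (1 - (1 - (1+x)^{-αᵢ})^β). In particular, the mixture with weights p* is smaller in the usual stochastic order than the mixture with weights p. -/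
open Finset

/-- Abel-summation based key lemma: if all suffix sums of `q` over `[k,n)` are
nonnegative, `w` is nondecreasing and `w 0 ≥ 0`, then `∑ q i * w i ≥ 0`. -/
lemma ik_abel_key (n : ℕ) (w q : ℕ → ℝ)
    (hw0 : 0 ≤ w 0) (hwm : ∀ i, w i ≤ w (i + 1))
    (hT : ∀ k, 0 ≤ ∑ j ∈ Finset.Ico k n, q j) :
    0 ≤ ∑ i ∈ Finset.range n, q i * w i := by
  have hmain := Finset.sum_range_by_parts w q n
  simp only [smul_eq_mul] at hmain
  have hcomm : ∑ i ∈ Finset.range n, q i * w i = ∑ i ∈ Finset.range n, w i * q i :=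
    Finset.sum_congr rfl (fun i _ => mul_comm _ _)
  set D : ℝ := ∑ j ∈ Finset.range n, q j with hD
  have hD0 : 0 ≤ D := by
    rw [hD, Finset.range_eq_Ico]
    exact hT 0
  have hS : ∀ i, i + 1 ≤ n → ∑ j ∈ Finset.range (i + 1), q j ≤ D := by
    intro i hi
    have h1 : ∑ j ∈ Finset.Ico (i + 1) n, q j = D - ∑ j ∈ Finset.range (i + 1), q j := by
      rw [Finset.sum_Ico_eq_sub _ hi]
    have := hT (i + 1)
    rw [h1] at this
    linarith
  have hbound : ∑ i ∈ Finset.range (n - 1), (w (i + 1) - w i) * ∑ j ∈ Finset.range (i + 1), q j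
      ≤ ∑ i ∈ Finset.range (n - 1), (w (i + 1) - w i) * D := by
    apply Finset.sum_le_sum
    intro i hi
    have hi' : i + 1 ≤ n := by
      have := Finset.mem_range.mp hi; omega
    exact mul_le_mul_of_nonneg_left (hS i hi') (by linarith [hwm i])
  have htel : ∑ i ∈ Finset.range (n - 1), (w (i + 1) - w i) * D = (w (n - 1) - w 0) * D := by
    rw [← Finset.sum_mul, Finset.sum_range_sub]
  have hw0n : w 0 ≤ w (n - 1) := by
    have : ∀ m, w 0 ≤ w m := by
      intro m
      induction m with
      | zero => exact le_rfl
      | succ k ih => exact ih.trans (hwm k)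
    exact this (n - 1)
  have hw0D : 0 ≤ w 0 * D := mul_nonneg hw0 hD0
  rw [hcomm, hmain]
  calc (0 : ℝ) ≤ w 0 * D := hw0D
    _ ≤ w (n - 1) * D - (w (n - 1) - w 0) * D := by ring_nf; linarith
    _ ≤ w (n - 1) * D - ∑ i ∈ Finset.range (n - 1), (w (i + 1) - w i) *
          ∑ j ∈ Finset.range (i + 1), q j := by
        rw [htel] at hbound; linarith

theorem ik_mixture_st_order_weights_submaj (n : ℕ) (hn : 1 ≤ n) (β : ℝ) (hβ : 0 < β)
    (α p pstar : Fin n → ℝ)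
    (hα : ∀ i, 0 < α i) (hαanti : Antitone α)
    (hp : ∀ i, 0 < p i) (hps : ∀ i, 0 < pstar i)
    (hpmono : Monotone p) (hpsmono : Monotone pstar)
    (hsubmaj : ∀ k : Fin n,
      ∑ j ∈ Finset.univ.filter (fun j => k ≤ j), pstar j ≤
        ∑ j ∈ Finset.univ.filter (fun j => k ≤ j), p j) :
    ∀ x : ℝ, 0 < x →
      ∑ i, pstar i * (1 - (1 - (1 + x) ^ (-(α i))) ^ β) ≤
        ∑ i, p i * (1 - (1 - (1 + x) ^ (-(α i))) ^ β) := by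
  intro x hx
  have hb1 : (1 : ℝ) < 1 + x := by linarith
  have hb0 : (0 : ℝ) < 1 + x := by linarith
  set w : Fin n → ℝ := fun i => 1 - (1 - (1 + x) ^ (-(α i))) ^ β with hwdef
  have hr1 : ∀ i : Fin n, (1 + x) ^ (-(α i)) < 1 := fun i =>
    Real.rpow_lt_one_of_one_lt_of_neg hb1 (by linarith [hα i])
  have hr0 : ∀ i : Fin n, 0 < (1 + x) ^ (-(α i)) := fun i => Real.rpow_pos_of_pos hb0 _
  have hwnn : ∀ i : Fin n, 0 ≤ w i := by
    intro i
    have h1 : (1 - (1 + x) ^ (-(α i))) ^ β ≤ 1 :=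
      Real.rpow_le_one (by linarith [hr1 i]) (by linarith [hr0 i]) hβ.le
    simp only [hwdef]; linarith
  have hwmono : Monotone w := by
    intro i j hij
    have hαji : α j ≤ α i := hαanti hij
    have h1 : (1 + x) ^ (-(α i)) ≤ (1 + x) ^ (-(α j)) :=
      Real.rpow_le_rpow_left_iff hb1 |>.mpr (by linarith)
    have h2 : (1 - (1 + x) ^ (-(α j))) ^ β ≤ (1 - (1 + x) ^ (-(α i))) ^ β :=
      Real.rpow_le_rpow (by linarith [hr1 j]) (by linarith) hβ.le
    simp only [hwdef]; linarith
  -- extend to ℕ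
  have hn1 : n - 1 < n := by omega
  set W : ℕ → ℝ := fun i => w ⟨min i (n - 1), by omega⟩ with hWdef
  set Q : ℕ → ℝ := fun i => if h : i < n then p ⟨i, h⟩ - pstar ⟨i, h⟩ else 0 with hQdef
  have hW0 : 0 ≤ W 0 := hwnn _
  have hWm : ∀ i, W i ≤ W (i + 1) := by
    intro i
    apply hwmono
    simp only [Fin.mk_le_mk]
    omega
  have hT : ∀ k, 0 ≤ ∑ j ∈ Finset.Ico k n, Q j := by
    intro k
    by_cases hk : k < n
    · have hfilt : Finset.Ico k n = (Finset.range n).filter (fun j => k ≤ j) := by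
        ext j; simp [Finset.mem_Ico, Finset.mem_filter, Finset.mem_range, and_comm]
      rw [hfilt, Finset.sum_filter]
      have : ∑ j ∈ Finset.range n, (if k ≤ j then Q j else 0)
          = ∑ j : Fin n, (if k ≤ (j : ℕ) then Q (j : ℕ) else 0) :=
        (Fin.sum_univ_eq_sum_range (fun j => if k ≤ j then Q j else 0) n).symm
      rw [this]
      have heq : ∀ j : Fin n, (if k ≤ (j : ℕ) then Q (j : ℕ) else 0)
          = (if (⟨k, hk⟩ : Fin n) ≤ j then p j - pstar j else 0) := by
        intro j
        by_cases hkj : k ≤ (j : ℕ)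
        · rw [if_pos hkj, if_pos (by exact hkj), hQdef]
          simp only [j.isLt, dif_pos, Fin.eta]
        · rw [if_neg hkj, if_neg (by exact hkj)]
      rw [Finset.sum_congr rfl (fun j _ => heq j), ← Finset.sum_filter]
      have := hsubmaj ⟨k, hk⟩
      rw [Finset.sum_sub_distrib]
      linarith
    · rw [Finset.Ico_eq_empty (by omega)]
      simp
  have hkey := ik_abel_key n W Q hW0 hWm hT
  have hrw : ∑ i ∈ Finset.range n, Q i * W i = ∑ i : Fin n, (p i - pstar i) * w i := by
    rw [← Fin.sum_univ_eq_sum_range (fun i => Q i * W i) n]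
    apply Finset.sum_congr rfl
    intro i _
    have hQ : Q (i : ℕ) = p i - pstar i := by
      simp only [hQdef, i.isLt, dif_pos, Fin.eta]
    have hW : W (i : ℕ) = w i := by
      have : (⟨min (i : ℕ) (n - 1), by omega⟩ : Fin n) = i := by
        apply Fin.ext; simp only []; omega
      simp only [hWdef, this]
    rw [hQ, hW]
  rw [hrw] at hkey
  have hsum : ∑ i : Fin n, (p i - pstar i) * w i
      = ∑ i, p i * w i - ∑ i, pstar i * w i := by
    rw [← Finset.sum_sub_distrib]
    apply Finset.sum_congr rfl
    intro i _
    ring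
  rw [hsum] at hkey
  simp only [hwdef] at hkey
  linarith
end

section
/- Fix x > 0, 0 < β < 1. Let (p₁, p₂, α₁, α₂) with p₁ ≥ p₂ > 0 and 0 < α₁ ≤ α₂. Define Δ₁ = (p₁ - p₂)[(1 - (1 - (1+x)^{-α₁})^β) - (1 - (1 - (1+x)^{-α₂})^β)] + β log(1+x) (α₁ - α₂)[p₂ (1+x)^{-α₂}(1 - (1+x)^{-α₂})^{β-1} - p₁ (1+x)^{-α₁}(1 - (1+x)^{-α₁})^{β-1}]. Then Δ₁ ≥ 0. -/
theorem delta1_nonneg (x β p₁ p₂ α₁ α₂ : ℝ) (hx : 0 < x) (hβ0 : 0 < β) (hβ1 : β < 1)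
    (hp2 : 0 < p₂) (hp : p₂ ≤ p₁) (hα1 : 0 < α₁) (hα : α₁ ≤ α₂) :
    0 ≤ (p₁ - p₂) * ((1 - (1 - (1 + x) ^ (-α₁)) ^ β) - (1 - (1 - (1 + x) ^ (-α₂)) ^ β))
        + β * Real.log (1 + x) * (α₁ - α₂) *
          (p₂ * (1 + x) ^ (-α₂) * (1 - (1 + x) ^ (-α₂)) ^ (β - 1)
            - p₁ * (1 + x) ^ (-α₁) * (1 - (1 + x) ^ (-α₁)) ^ (β - 1)) := by
  have ht : (1:ℝ) < 1 + x := by linarith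
  set u₁ := (1 + x) ^ (-α₁) with hu₁
  set u₂ := (1 + x) ^ (-α₂) with hu₂
  have hu₁pos : 0 < u₁ := Real.rpow_pos_of_pos (by linarith) _
  have hu₂pos : 0 < u₂ := Real.rpow_pos_of_pos (by linarith) _
  have hu₁lt : u₁ < 1 := Real.rpow_lt_one_of_one_lt_of_neg ht (by linarith)
  have hu₂lt : u₂ < 1 := Real.rpow_lt_one_of_one_lt_of_neg ht (by linarith)
  have hle : u₂ ≤ u₁ := Real.rpow_le_rpow_of_exponent_le ht.le (by linarith)
  -- first bracket
  have h1 : (1 - u₁) ^ β ≤ (1 - u₂) ^ β :=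
    Real.rpow_le_rpow (by linarith) (by linarith) hβ0.le
  -- third: (1-u₂)^(β-1) ≤ (1-u₁)^(β-1)
  have h2 : (1 - u₂) ^ (β - 1) ≤ (1 - u₁) ^ (β - 1) :=
    Real.rpow_le_rpow_of_nonpos (by linarith) (by linarith) (by linarith)
  have h3 : p₂ * u₂ * (1 - u₂) ^ (β - 1) ≤ p₁ * u₁ * (1 - u₁) ^ (β - 1) := by
    have hp2' : 0 ≤ (1 - u₂) ^ (β - 1) := (Real.rpow_pos_of_pos (by linarith) _).le
    have := mul_le_mul (mul_le_mul hp hle hu₂pos.le (by linarith)) h2 hp2'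
      (mul_nonneg (by linarith) hu₁pos.le)
    linarith
  have hlog : 0 < Real.log (1 + x) := Real.log_pos ht
  have ha : 0 ≤ (p₁ - p₂) * ((1 - (1 - u₁) ^ β) - (1 - (1 - u₂) ^ β)) := by
    have : 0 ≤ (1 - (1 - u₁) ^ β) - (1 - (1 - u₂) ^ β) := by linarith
    exact mul_nonneg (by linarith) this
  have hb : 0 ≤ β * Real.log (1 + x) * (α₁ - α₂) *
      (p₂ * u₂ * (1 - u₂) ^ (β - 1) - p₁ * u₁ * (1 - u₁) ^ (β - 1)) :=
    mul_nonneg_of_nonpos_of_nonpos (mul_nonpos_of_nonneg_of_nonpos (mul_pos hβ0 hlog).le (by linarith)) (by linarith)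
  linarith
end

section
/- Fix x > 0 and α > 0. Let (p₁, p₂, β₁, β₂) with p₁ ≥ p₂ > 0 and 0 < β₁ ≤ β₂. Define Δ₂ = (p₁ - p₂)[(1 - (1 - (1+x)^{-α})^{β₁}) - (1 - (1 - (1+x)^{-α})^{β₂})] + (β₁ - β₂) log(1 - (1+x)^{-α}) [p₂ (1 - (1+x)^{-α})^{β₂} - p₁ (1 - (1+x)^{-α})^{β₁}]. Then Δ₂ ≤ 0. -/
theorem delta2_nonpos (x α p₁ p₂ β₁ β₂ : ℝ) (hx : 0 < x) (hα : 0 < α)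
    (hp2 : 0 < p₂) (hp : p₂ ≤ p₁) (hβ1 : 0 < β₁) (hβ : β₁ ≤ β₂) :
    (p₁ - p₂) * ((1 - (1 - (1 + x) ^ (-α)) ^ β₁) - (1 - (1 - (1 + x) ^ (-α)) ^ β₂))
        + (β₁ - β₂) * Real.log (1 - (1 + x) ^ (-α)) *
          (p₂ * (1 - (1 + x) ^ (-α)) ^ β₂ - p₁ * (1 - (1 + x) ^ (-α)) ^ β₁) ≤ 0 := by
  set t : ℝ := (1 + x) ^ (-α) with ht
  have h1x : (1:ℝ) < 1 + x := by linarith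
  have ht0 : 0 < t := Real.rpow_pos_of_pos (by linarith) _
  have ht1 : t < 1 := Real.rpow_lt_one_of_one_lt_of_neg h1x (by linarith)
  set u : ℝ := 1 - t with hu
  have hu0 : 0 < u := by simp [hu]; linarith
  have hu1 : u < 1 := by simp [hu]; linarith
  have hpow : u ^ β₂ ≤ u ^ β₁ := Real.rpow_le_rpow_of_exponent_ge hu0 hu1.le hβ
  have hlog : Real.log u < 0 := Real.log_neg hu0 hu1
  have h1 : (p₁ - p₂) * ((1 - u ^ β₁) - (1 - u ^ β₂)) ≤ 0 := by
    have : (1 - u ^ β₁) - (1 - u ^ β₂) ≤ 0 := by linarith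
    exact mul_nonpos_of_nonneg_of_nonpos (by linarith) this
  have h2 : (β₁ - β₂) * Real.log u * (p₂ * u ^ β₂ - p₁ * u ^ β₁) ≤ 0 := by
    have hfac : 0 ≤ (β₁ - β₂) * Real.log u :=
      by nlinarith [hlog.le]
    have hdiff : p₂ * u ^ β₂ - p₁ * u ^ β₁ ≤ 0 := by
      have := mul_le_mul hp hpow (Real.rpow_pos_of_pos hu0 _).le (by linarith)
      linarith
    exact mul_nonpos_of_nonneg_of_nonpos hfac hdiff
  linarith
end

section
/- Let T = ωI + (1-ω)Π be a 2×2 T-transform matrix with 0 ≤ ω ≤ 1 and Π the permutation matrix swapping the two coordinates. Fix x > 0, 0 < β < 1, and (p, α) ∈ 𝓛₂ (i.e., (p₁-p₂)(α₁-α₂) ≤ 0, pᵢ, αᵢ > 0). Let (p*, α*) be obtained by multiplying the 2×2 matrix with rows p and α on the right by T. Then Σᵢ₌₁² pᵢ (1 - (1 - (1+x)^{-αᵢ})^β) ≥ Σᵢ₌₁² p*ᵢ (1 - (1 - (1+x)^{-α*ᵢ})^β). -/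
open Real Set

private lemma ik_f_convex_pt (x β : ℝ) (hx : 0 < x) (hβ0 : 0 < β) (hβ1 : β < 1)
    (a b ω : ℝ) (ha : 0 < a) (hb : 0 < b) (hω0 : 0 ≤ ω) (hω1 : ω ≤ 1) :
    1 - (1 - (1 + x) ^ (-(ω * a + (1 - ω) * b))) ^ β ≤
      ω * (1 - (1 - (1 + x) ^ (-a)) ^ β) + (1 - ω) * (1 - (1 - (1 + x) ^ (-b)) ^ β) := by
  have h1 : (0:ℝ) < 1 + x := by linarith
  have h1' : (1:ℝ) < 1 + x := by linarith
  set ua := (1 + x) ^ (-a) with hua_def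
  set ub := (1 + x) ^ (-b) with hub_def
  have hua0 : 0 < ua := rpow_pos_of_pos h1 _
  have hub0 : 0 < ub := rpow_pos_of_pos h1 _
  have hua1 : ua ≤ 1 := rpow_le_one_of_one_le_of_nonpos h1'.le (by linarith)
  have hub1 : ub ≤ 1 := rpow_le_one_of_one_le_of_nonpos h1'.le (by linarith)
  have hconv : (1 + x) ^ (-(ω * a + (1 - ω) * b)) ≤ ω * ua + (1 - ω) * ub := by
    rw [hua_def, hub_def, rpow_def_of_pos h1, rpow_def_of_pos h1, rpow_def_of_pos h1]
    have h := convexOn_exp.2 (Set.mem_univ (Real.log (1 + x) * -a))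
      (Set.mem_univ (Real.log (1 + x) * -b)) hω0
      (show (0:ℝ) ≤ 1 - ω by linarith) (show ω + (1 - ω) = 1 by ring)
    simp only [smul_eq_mul] at h
    calc Real.exp (Real.log (1 + x) * -(ω * a + (1 - ω) * b))
        = Real.exp (ω * (Real.log (1 + x) * -a) + (1 - ω) * (Real.log (1 + x) * -b)) := by
          ring_nf
      _ ≤ ω * Real.exp (Real.log (1 + x) * -a) + (1 - ω) * Real.exp (Real.log (1 + x) * -b) := h
  have hcombo1 : ω * ua + (1 - ω) * ub ≤ 1 := by nlinarith
  have hmono : (1 - (ω * ua + (1 - ω) * ub)) ^ β ≤ (1 - (1 + x) ^ (-(ω * a + (1 - ω) * b))) ^ β :=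
    rpow_le_rpow (by linarith) (by linarith) hβ0.le
  have hconc := (Real.concaveOn_rpow hβ0.le hβ1.le).2
    (Set.mem_Ici.mpr (by linarith : (0:ℝ) ≤ 1 - ua))
    (Set.mem_Ici.mpr (by linarith : (0:ℝ) ≤ 1 - ub)) hω0
    (show (0:ℝ) ≤ 1 - ω by linarith) (show ω + (1 - ω) = 1 by ring)
  simp only [smul_eq_mul] at hconc
  have heq : ω * (1 - ua) + (1 - ω) * (1 - ub) = 1 - (ω * ua + (1 - ω) * ub) := by ring
  rw [heq] at hconc
  linarith

private lemma ik_f_anti (x β : ℝ) (hx : 0 < x) (hβ0 : 0 < β)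
    (a b : ℝ) (ha : 0 < a) (hab : a ≤ b) :
    1 - (1 - (1 + x) ^ (-b)) ^ β ≤ 1 - (1 - (1 + x) ^ (-a)) ^ β := by
  have h1 : (0:ℝ) < 1 + x := by linarith
  have h1' : (1:ℝ) < 1 + x := by linarith
  have h : (1 + x) ^ (-b) ≤ (1 + x) ^ (-a) := rpow_le_rpow_left_iff h1' |>.mpr (by linarith)
  have h2 : (1 + x) ^ (-a) ≤ 1 := rpow_le_one_of_one_le_of_nonpos h1'.le (by linarith)
  have := rpow_le_rpow (x := 1 - (1 + x) ^ (-a)) (y := 1 - (1 + x) ^ (-b)) (by linarith) (by linarith) hβ0.le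
  linarith

theorem ik_mixture_Ttransform_st_alpha (x β ω p₁ p₂ α₁ α₂ : ℝ)
    (hx : 0 < x) (hβ0 : 0 < β) (hβ1 : β < 1) (hω0 : 0 ≤ ω) (hω1 : ω ≤ 1)
    (hp1 : 0 < p₁) (hp2 : 0 < p₂) (hα1 : 0 < α₁) (hα2 : 0 < α₂)
    (hL : (p₁ - p₂) * (α₁ - α₂) ≤ 0)
    (p₁' p₂' α₁' α₂' : ℝ)
    (hp₁' : p₁' = ω * p₁ + (1 - ω) * p₂) (hp₂' : p₂' = ω * p₂ + (1 - ω) * p₁)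
    (hα₁' : α₁' = ω * α₁ + (1 - ω) * α₂) (hα₂' : α₂' = ω * α₂ + (1 - ω) * α₁) :
    p₁' * (1 - (1 - (1 + x) ^ (-α₁')) ^ β) + p₂' * (1 - (1 - (1 + x) ^ (-α₂')) ^ β) ≤
      p₁ * (1 - (1 - (1 + x) ^ (-α₁)) ^ β) + p₂ * (1 - (1 - (1 + x) ^ (-α₂)) ^ β) := by
  set fa := 1 - (1 - (1 + x) ^ (-α₁)) ^ β with hfa
  set fb := 1 - (1 - (1 + x) ^ (-α₂)) ^ β with hfb
  have hc1 : 1 - (1 - (1 + x) ^ (-α₁')) ^ β ≤ ω * fa + (1 - ω) * fb := by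
    rw [hα₁']; exact ik_f_convex_pt x β hx hβ0 hβ1 α₁ α₂ ω hα1 hα2 hω0 hω1
  have hc2 : 1 - (1 - (1 + x) ^ (-α₂')) ^ β ≤ ω * fb + (1 - ω) * fa := by
    rw [hα₂']; exact ik_f_convex_pt x β hx hβ0 hβ1 α₂ α₁ ω hα2 hα1 hω0 hω1
  have hp1' : 0 ≤ p₁' := by rw [hp₁']; nlinarith
  have hp2' : 0 ≤ p₂' := by rw [hp₂']; nlinarith
  have hkey : (p₂ - p₁) * (fa - fb) ≤ 0 := by
    rcases lt_trichotomy α₁ α₂ with h | h | h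
    · have hf : fb ≤ fa := ik_f_anti x β hx hβ0 α₁ α₂ hα1 h.le
      have hpq : p₂ ≤ p₁ := by nlinarith
      exact mul_nonpos_of_nonpos_of_nonneg (by linarith) (by linarith)
    · have : fa = fb := by rw [hfa, hfb, h]
      simp [this]
    · have hf : fa ≤ fb := ik_f_anti x β hx hβ0 α₂ α₁ hα2 h.le
      have hpq : p₁ ≤ p₂ := by nlinarith
      exact mul_nonpos_of_nonneg_of_nonpos (by linarith) (by linarith)
  calc p₁' * (1 - (1 - (1 + x) ^ (-α₁')) ^ β) + p₂' * (1 - (1 - (1 + x) ^ (-α₂')) ^ β)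
      ≤ p₁' * (ω * fa + (1 - ω) * fb) + p₂' * (ω * fb + (1 - ω) * fa) := by
        have := mul_le_mul_of_nonneg_left hc1 hp1'
        have := mul_le_mul_of_nonneg_left hc2 hp2'
        linarith
    _ = p₁ * fa + p₂ * fb + 2 * ω * (1 - ω) * ((p₂ - p₁) * (fa - fb)) := by
        rw [hp₁', hp₂']; ring
    _ ≤ p₁ * fa + p₂ * fb := by
        nlinarith [hkey, mul_nonneg hω0 (sub_nonneg.mpr hω1)]
end

section
/- Let T be a 2×2 T-transform matrix. Fix x > 0 and α > 0, and let (p, β) ∈ 𝓛₂ (i.e., (p₁-p₂)(β₁-β₂) ≤ 0, pᵢ, βᵢ > 0). Let (p*, β*) be obtained by right-multiplying the matrix with rows p and β by T. Then Σᵢ₌₁² pᵢ (1 - (1 - (1+x)^{-α})^{βᵢ}) ≤ Σᵢ₌₁² p*ᵢ (1 - (1 - (1+x)^{-α})^{β*ᵢ}). -/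
lemma rpow_convex_aux {t : ℝ} (ht0 : 0 < t) (a b ω : ℝ) (hω0 : 0 ≤ ω) (hω1 : ω ≤ 1) :
    t ^ (ω * a + (1 - ω) * b) ≤ ω * t ^ a + (1 - ω) * t ^ b := by
  rw [Real.rpow_def_of_pos ht0, Real.rpow_def_of_pos ht0, Real.rpow_def_of_pos ht0]
  have h := convexOn_exp.2 (Set.mem_univ (Real.log t * a)) (Set.mem_univ (Real.log t * b))
    hω0 (by linarith : (0:ℝ) ≤ 1 - ω) (by ring)
  simp only [smul_eq_mul] at h
  calc Real.exp (Real.log t * (ω * a + (1 - ω) * b))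
      = Real.exp (ω * (Real.log t * a) + (1 - ω) * (Real.log t * b)) := by ring_nf
    _ ≤ ω * Real.exp (Real.log t * a) + (1 - ω) * Real.exp (Real.log t * b) := h

theorem ik_mixture_Ttransform_st_beta (x α ω p₁ p₂ β₁ β₂ : ℝ)
    (hx : 0 < x) (hα : 0 < α) (hω0 : 0 ≤ ω) (hω1 : ω ≤ 1)
    (hp1 : 0 < p₁) (hp2 : 0 < p₂) (hβ1 : 0 < β₁) (hβ2 : 0 < β₂)
    (hL : (p₁ - p₂) * (β₁ - β₂) ≤ 0)
    (p₁' p₂' β₁' β₂' : ℝ)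
    (hp₁' : p₁' = ω * p₁ + (1 - ω) * p₂) (hp₂' : p₂' = ω * p₂ + (1 - ω) * p₁)
    (hβ₁' : β₁' = ω * β₁ + (1 - ω) * β₂) (hβ₂' : β₂' = ω * β₂ + (1 - ω) * β₁) :
    p₁ * (1 - (1 - (1 + x) ^ (-α)) ^ β₁) + p₂ * (1 - (1 - (1 + x) ^ (-α)) ^ β₂) ≤
      p₁' * (1 - (1 - (1 + x) ^ (-α)) ^ β₁') + p₂' * (1 - (1 - (1 + x) ^ (-α)) ^ β₂') := by
  set t : ℝ := 1 - (1 + x) ^ (-α) with htdef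
  have h1x : (1:ℝ) < 1 + x := by linarith
  have hlt : (1 + x) ^ (-α) < 1 :=
    Real.rpow_lt_one_of_one_lt_of_neg h1x (by linarith)
  have hpos : 0 < (1 + x) ^ (-α) := Real.rpow_pos_of_pos (by linarith) _
  have ht0 : 0 < t := by simp [htdef]; linarith
  have ht1 : t ≤ 1 := by simp [htdef]; linarith
  set A := t ^ β₁ with hA
  set B := t ^ β₂ with hB
  have h1 : t ^ β₁' ≤ ω * A + (1 - ω) * B := by
    rw [hβ₁']; exact rpow_convex_aux ht0 β₁ β₂ ω hω0 hω1
  have h2 : t ^ β₂' ≤ ω * B + (1 - ω) * A := by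
    rw [hβ₂']
    have := rpow_convex_aux ht0 β₂ β₁ ω hω0 hω1
    linarith
  have h3 : 0 ≤ (p₁ - p₂) * (A - B) := by
    rcases lt_trichotomy β₁ β₂ with h | h | h
    · have hAB : B ≤ A := Real.rpow_le_rpow_of_exponent_ge ht0 ht1 h.le
      have hp : 0 ≤ p₁ - p₂ := by nlinarith
      nlinarith
    · simp [hA, hB, h]
    · have hAB : A ≤ B := Real.rpow_le_rpow_of_exponent_ge ht0 ht1 h.le
      have hp : p₁ - p₂ ≤ 0 := by nlinarith
      nlinarith
  have hq1 : 0 ≤ p₁' := by rw [hp₁']; nlinarith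
  have hq2 : 0 ≤ p₂' := by rw [hp₂']; nlinarith
  have H1 : p₁' * (ω * A + (1 - ω) * B) ≤ p₁' * (ω * A + (1 - ω) * B) := le_refl _
  have k1 : p₁' * t ^ β₁' ≤ p₁' * (ω * A + (1 - ω) * B) :=
    mul_le_mul_of_nonneg_left h1 hq1
  have k2 : p₂' * t ^ β₂' ≤ p₂' * (ω * B + (1 - ω) * A) :=
    mul_le_mul_of_nonneg_left h2 hq2
  have key : p₁' * (ω * A + (1 - ω) * B) + p₂' * (ω * B + (1 - ω) * A)
      ≤ p₁ * A + p₂ * B := by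
    have hid : p₁' * (ω * A + (1 - ω) * B) + p₂' * (ω * B + (1 - ω) * A)
        = p₁ * A + p₂ * B - 2 * (ω * (1 - ω)) * ((p₁ - p₂) * (A - B)) := by
      rw [hp₁', hp₂']; ring
    have hnn : 0 ≤ 2 * (ω * (1 - ω)) * ((p₁ - p₂) * (A - B)) := by
      have := mul_nonneg hω0 (by linarith : (0:ℝ) ≤ 1 - ω)
      positivity
    linarith
  have hsum : p₁' + p₂' = p₁ + p₂ := by rw [hp₁', hp₂']; ring
  linarith [k1, k2, key]
end

section
/- Let n ≥ 1 and suppose αᵢ, βᵢ, α*ᵢ, β*ᵢ > 0 and positive weights pᵢ, p*ᵢ satisfy max_i α*ᵢ ≤ min_i αᵢ and max_i αᵢβᵢ ≤ min_i α*ᵢβ*ᵢ. Then the ratio F₁(x)/F₂(x) is non-increasing in x > 0, where F₁(x) = Σᵢ pᵢ (1 - (1+x)^{-αᵢ})^{βᵢ} and F₂(x) = Σᵢ p*ᵢ (1 - (1+x)^{-α*ᵢ})^{β*ᵢ}. Equivalently, the first mixture is smaller than the second in the reversed hazard rate order. -/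
open Finset Real MeasureTheory intervalIntegral

lemma ik_Dmono {s α1 α2 : ℝ} (hs0 : 0 < s) (hs1 : s < 1) (h1 : 0 < α1) (h12 : α1 ≤ α2) :
    s ^ (α2 - 1) / (1 - s ^ α2) ≤ s ^ (α1 - 1) / (1 - s ^ α1) := by
  have h2 : 0 < α2 := lt_of_lt_of_le h1 h12
  have ht2 : s ^ α2 ≤ s ^ α1 := Real.rpow_le_rpow_of_exponent_ge hs0 hs1.le h12
  have hlt1 : s ^ α1 < 1 := Real.rpow_lt_one hs0.le hs1 h1
  have hlt2 : s ^ α2 < 1 := Real.rpow_lt_one hs0.le hs1 h2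
  have hp1 : 0 < s ^ α1 := Real.rpow_pos_of_pos hs0 _
  have hp2 : 0 < s ^ α2 := Real.rpow_pos_of_pos hs0 _
  have e1 : s ^ (α1 - 1) = s ^ α1 / s := by rw [Real.rpow_sub hs0, Real.rpow_one]
  have e2 : s ^ (α2 - 1) = s ^ α2 / s := by rw [Real.rpow_sub hs0, Real.rpow_one]
  have hd1 : 0 < 1 - s ^ α1 := by linarith
  have hd2 : 0 < 1 - s ^ α2 := by linarith
  rw [e1, e2, div_div, div_div, div_le_div_iff₀ (by positivity) (by positivity)]
  nlinarith [mul_le_mul_of_nonneg_left ht2 hs0.le, mul_pos hp1 hp2]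

lemma ik_hasDerivAt {α : ℝ} (hα : 0 < α) {s : ℝ} (hs0 : 0 < s) (hs1 : s < 1) :
    HasDerivAt (fun t : ℝ => -Real.log (1 - t ^ α)) (α * s ^ (α - 1) / (1 - s ^ α)) s := by
  have hlt : s ^ α < 1 := Real.rpow_lt_one hs0.le hs1 hα
  have hne : 1 - s ^ α ≠ 0 := by linarith [Real.rpow_pos_of_pos hs0 α]
  have h1 : HasDerivAt (fun t : ℝ => t ^ α) (α * s ^ (α - 1)) s := by
    simpa using Real.hasDerivAt_rpow_const (x := s) (p := α) (Or.inl hs0.ne')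
  have h2 : HasDerivAt (fun t : ℝ => 1 - t ^ α) (-(α * s ^ (α - 1))) s := by
    exact h1.const_sub 1
  have h3 := (Real.hasDerivAt_log hne).comp s h2
  have := h3.neg
  exact this.congr_deriv (by ring)

lemma ik_contOn {α : ℝ} (hα : 0 < α) {v u : ℝ} (hv : 0 < v) (hu : u < 1) (hvu : v ≤ u) :
    ContinuousOn (fun s : ℝ => s ^ (α - 1) / (1 - s ^ α)) (Set.Icc v u) := by
  apply ContinuousOn.div
  · exact ContinuousOn.rpow_const continuousOn_id (fun s hs => Or.inl (by
      have := hs.1; intro h; subst h; linarith))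
  · exact continuousOn_const.sub (ContinuousOn.rpow_const continuousOn_id
      (fun s hs => Or.inl (by have := hs.1; intro h; subst h; linarith)))
  · intro s hs
    have hs0 : 0 < s := lt_of_lt_of_le hv hs.1
    have hs1 : s < 1 := lt_of_le_of_lt hs.2 hu
    have : s ^ α < 1 := Real.rpow_lt_one hs0.le hs1 hα
    intro h; rw [sub_eq_zero] at h; exact absurd h.symm this.ne

lemma ik_logdiff {α v u : ℝ} (hα : 0 < α) (hv : 0 < v) (hvu : v ≤ u) (hu : u < 1) :
    (Real.log (1 - v ^ α) - Real.log (1 - u ^ α)) / α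
      = ∫ s in v..u, s ^ (α - 1) / (1 - s ^ α) := by
  have key : Real.log (1 - v ^ α) - Real.log (1 - u ^ α)
      = ∫ s in v..u, α * (s ^ (α - 1) / (1 - s ^ α)) := by
    have hftc := intervalIntegral.integral_eq_sub_of_hasDerivAt
      (f := fun t : ℝ => -Real.log (1 - t ^ α))
      (f' := fun s => α * s ^ (α - 1) / (1 - s ^ α)) (a := v) (b := u)
      (fun s hs => by
        rw [Set.uIcc_of_le hvu] at hs
        exact ik_hasDerivAt hα (lt_of_lt_of_le hv hs.1) (lt_of_le_of_lt hs.2 hu))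
      (by
        apply ContinuousOn.intervalIntegrable
        rw [Set.uIcc_of_le hvu]
        have := (ik_contOn hα hv hu hvu).const_smul α
        simpa [mul_div_assoc, smul_eq_mul, Pi.smul_def] using this)
    rw [show (∫ s in v..u, α * (s ^ (α-1) / (1 - s ^ α)))
        = ∫ s in v..u, α * s ^ (α-1) / (1 - s ^ α) by
      congr 1; ext s; ring]
    rw [hftc]; ring
  rw [intervalIntegral.integral_const_mul] at key
  rw [key]; field_simp

lemma ik_Hmono {α1 α2 v u : ℝ} (h1 : 0 < α1) (h12 : α1 ≤ α2)
    (hv : 0 < v) (hvu : v ≤ u) (hu : u < 1) :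
    (Real.log (1 - v ^ α2) - Real.log (1 - u ^ α2)) / α2
      ≤ (Real.log (1 - v ^ α1) - Real.log (1 - u ^ α1)) / α1 := by
  have h2 : 0 < α2 := lt_of_lt_of_le h1 h12
  rw [ik_logdiff h2 hv hvu hu, ik_logdiff h1 hv hvu hu]
  apply intervalIntegral.integral_mono_on hvu
  · exact (ik_contOn h2 hv hu hvu).intervalIntegrable_of_Icc hvu
  · exact (ik_contOn h1 hv hu hvu).intervalIntegrable_of_Icc hvu
  · intro s hs
    exact ik_Dmono (lt_of_lt_of_le hv hs.1) (lt_of_le_of_lt hs.2 hu) h1 h12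

lemma ik_pair {αa βa αb βb v u : ℝ} (hαa : 0 < αa) (hβa : 0 < βa)
    (hαb : 0 < αb) (hβb : 0 < βb) (hba : αb ≤ αa) (hab : αa * βa ≤ αb * βb)
    (hv : 0 < v) (hvu : v ≤ u) (hu : u < 1) :
    (1 - v ^ αa) ^ βa * (1 - u ^ αb) ^ βb ≤ (1 - u ^ αa) ^ βa * (1 - v ^ αb) ^ βb := by
  have hv1 : v < 1 := lt_of_le_of_lt hvu hu
  have hu0 : 0 < u := lt_of_lt_of_le hv hvu
  have pva : 0 < 1 - v ^ αa := by linarith [Real.rpow_lt_one hv.le hv1 hαa]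
  have pua : 0 < 1 - u ^ αa := by linarith [Real.rpow_lt_one hu0.le hu hαa]
  have pvb : 0 < 1 - v ^ αb := by linarith [Real.rpow_lt_one hv.le hv1 hαb]
  have pub : 0 < 1 - u ^ αb := by linarith [Real.rpow_lt_one hu0.le hu hαb]
  have hva : v ^ αa ≤ u ^ αa := Real.rpow_le_rpow hv.le hvu hαa.le
  have hvb : v ^ αb ≤ u ^ αb := Real.rpow_le_rpow hv.le hvu hαb.le
  rw [← Real.log_le_log_iff (by positivity) (by positivity),
    Real.log_mul (by positivity) (by positivity),
    Real.log_mul (by positivity) (by positivity),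
    Real.log_rpow pva, Real.log_rpow pua, Real.log_rpow pvb, Real.log_rpow pub]
  have hH := ik_Hmono hαb hba hv hvu hu
  have hLb : 0 ≤ Real.log (1 - v ^ αb) - Real.log (1 - u ^ αb) := by
    have := Real.log_le_log pub (by linarith : 1 - u ^ αb ≤ 1 - v ^ αb)
    linarith
  have key : βa * (Real.log (1 - v ^ αa) - Real.log (1 - u ^ αa))
      ≤ βb * (Real.log (1 - v ^ αb) - Real.log (1 - u ^ αb)) := by
    have e1 : βa * (Real.log (1 - v ^ αa) - Real.log (1 - u ^ αa))
        = (αa * βa) * ((Real.log (1 - v ^ αa) - Real.log (1 - u ^ αa)) / αa) := by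
      field_simp
    have e2 : βb * (Real.log (1 - v ^ αb) - Real.log (1 - u ^ αb))
        = (αb * βb) * ((Real.log (1 - v ^ αb) - Real.log (1 - u ^ αb)) / αb) := by
      field_simp
    rw [e1, e2]
    have hHb : 0 ≤ (Real.log (1 - v ^ αb) - Real.log (1 - u ^ αb)) / αb :=
      div_nonneg hLb hαb.le
    calc (αa * βa) * ((Real.log (1 - v ^ αa) - Real.log (1 - u ^ αa)) / αa)
        ≤ (αa * βa) * ((Real.log (1 - v ^ αb) - Real.log (1 - u ^ αb)) / αb) :=
          mul_le_mul_of_nonneg_left hH (by positivity)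
      _ ≤ (αb * βb) * ((Real.log (1 - v ^ αb) - Real.log (1 - u ^ αb)) / αb) :=
          mul_le_mul_of_nonneg_right hab hHb
  linarith

theorem ik_mixture_rh_order (n : ℕ) (hn : 1 ≤ n)
    (p pstar α αstar β βstar : Fin n → ℝ)
    (hp : ∀ i, 0 < p i) (hps : ∀ i, 0 < pstar i)
    (hα : ∀ i, 0 < α i) (hαs : ∀ i, 0 < αstar i)
    (hβ : ∀ i, 0 < β i) (hβs : ∀ i, 0 < βstar i)
    (hαcond : ∀ i j, αstar i ≤ α j)
    (hαβcond : ∀ i j, α i * β i ≤ αstar j * βstar j) :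
    AntitoneOn (fun x : ℝ =>
      (∑ i, p i * (1 - (1 + x) ^ (-(α i))) ^ (β i)) /
        (∑ i, pstar i * (1 - (1 + x) ^ (-(αstar i))) ^ (βstar i)))
      (Set.Ioi (0 : ℝ)) := by
  intro x hx y hy hxy
  simp only [Set.mem_Ioi] at hx hy
  have hne : (univ : Finset (Fin n)).Nonempty := by
    have : Nonempty (Fin n) := Fin.pos_iff_nonempty.mp hn
    exact univ_nonempty
  -- rewrite powers
  have hrw : ∀ (z a : ℝ), 0 < z → (1 + z) ^ (-a) = ((1 + z)⁻¹) ^ a := by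
    intro z a hz
    rw [Real.rpow_neg (by linarith), ← Real.inv_rpow (by linarith)]
  set u : ℝ := (1 + x)⁻¹ with hu_def
  set v : ℝ := (1 + y)⁻¹ with hv_def
  have hv0 : 0 < v := by positivity
  have hu0 : 0 < u := by positivity
  have hu1 : u < 1 := by
    rw [hu_def, inv_lt_one_iff₀]; right; linarith
  have hvu : v ≤ u := by
    rw [hu_def, hv_def]
    apply inv_anti₀ (by linarith) (by linarith)
  have hv1 : v < 1 := lt_of_le_of_lt hvu hu1
  have posterm : ∀ (w a b : ℝ), 0 < w → w < 1 → 0 < a → 0 < b →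
      0 < (1 - w ^ a) ^ b := by
    intro w a b hw hw1 ha hb
    have : w ^ a < 1 := Real.rpow_lt_one hw.le hw1 ha
    have : 0 < 1 - w ^ a := by linarith
    positivity
  have hden : ∀ (w : ℝ), 0 < w → w < 1 →
      0 < ∑ i, pstar i * (1 - w ^ (αstar i)) ^ (βstar i) := by
    intro w hw hw1
    apply Finset.sum_pos (fun i _ => mul_pos (hps i) (posterm w _ _ hw hw1 (hαs i) (hβs i))) hne
  simp only [hrw x _ hx, hrw y _ hy, ← hu_def, ← hv_def]
  rw [div_le_div_iff₀ (hden v hv0 hv1) (hden u hu0 hu1)]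
  rw [Finset.sum_mul_sum, Finset.sum_mul_sum]
  apply Finset.sum_le_sum
  intro i _
  apply Finset.sum_le_sum
  intro j _
  have key := ik_pair (hα i) (hβ i) (hαs j) (hβs j) (hαcond j i) (hαβcond i j) hv0 hvu hu1
  calc p i * (1 - v ^ α i) ^ β i * (pstar j * (1 - u ^ αstar j) ^ βstar j)
      = (p i * pstar j) * ((1 - v ^ α i) ^ β i * (1 - u ^ αstar j) ^ βstar j) := by ring
    _ ≤ (p i * pstar j) * ((1 - u ^ α i) ^ β i * (1 - v ^ αstar j) ^ βstar j) := by
        apply mul_le_mul_of_nonneg_left key (mul_pos (hp i) (hps j)).le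
    _ = p i * (1 - u ^ α i) ^ β i * (pstar j * (1 - v ^ αstar j) ^ βstar j) := by ring
end

section
/- Fix x > 0 and parameters αᵢ, βᵢ, αⱼ*, βⱼ* > 0 with αⱼ* ≤ αᵢ and αᵢβᵢ ≤ αⱼ*βⱼ*. Then αᵢβᵢ (1+x)^{-(αᵢ+1)} (1 - (1+x)^{-αⱼ*}) ≤ αⱼ*βⱼ* (1+x)^{-(αⱼ*+1)} (1 - (1+x)^{-αᵢ}). -/
theorem ik_rh_termwise_ineq (x αi βi αj βj : ℝ) (hx : 0 < x)
    (hαi : 0 < αi) (hβi : 0 < βi) (hαj : 0 < αj) (hβj : 0 < βj)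
    (h1 : αj ≤ αi) (h2 : αi * βi ≤ αj * βj) :
    αi * βi * (1 + x) ^ (-(αi + 1)) * (1 - (1 + x) ^ (-αj)) ≤
      αj * βj * (1 + x) ^ (-(αj + 1)) * (1 - (1 + x) ^ (-αi)) := by
  have hb : (1:ℝ) < 1 + x := by linarith
  have hb0 : (0:ℝ) < 1 + x := by linarith
  have hpow : (1 + x) ^ (-(αi + 1)) ≤ (1 + x) ^ (-(αj + 1)) :=
    Real.rpow_le_rpow_left_iff hb |>.mpr (by linarith)
  have hfac : 1 - (1 + x) ^ (-αj) ≤ 1 - (1 + x) ^ (-αi) := by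
    have := Real.rpow_le_rpow_left_iff hb |>.mpr (neg_le_neg h1)
    linarith
  have hfac0 : 0 ≤ 1 - (1 + x) ^ (-αj) := by
    have : (1 + x) ^ (-αj) ≤ 1 :=
      Real.rpow_le_one_of_one_le_of_nonpos hb.le (by linarith)
    linarith
  have hp0 : 0 ≤ (1 + x) ^ (-(αi + 1)) := (Real.rpow_pos_of_pos hb0 _).le
  have hab : 0 ≤ αi * βi := by positivity
  calc αi * βi * (1 + x) ^ (-(αi + 1)) * (1 - (1 + x) ^ (-αj))
      ≤ αj * βj * (1 + x) ^ (-(αj + 1)) * (1 - (1 + x) ^ (-αj)) := by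
        apply mul_le_mul_of_nonneg_right _ hfac0
        exact mul_le_mul h2 hpow hp0 (by positivity)
    _ ≤ αj * βj * (1 + x) ^ (-(αj + 1)) * (1 - (1 + x) ^ (-αi)) :=
        mul_le_mul_of_nonneg_left hfac (by positivity)
end

section
/- Let n ≥ 1 and suppose positive parameters satisfy max_i αᵢ ≤ min_i α*ᵢ and min_i αᵢβᵢ ≥ max_i α*ᵢβ*ᵢ, with positive weights pᵢ, p*ᵢ. Then the ratio f₁(x)/f₂(x) is non-decreasing in x > 0, where f₁(x) = Σᵢ pᵢ αᵢβᵢ (1+x)^{-(αᵢ+1)}(1 - (1+x)^{-αᵢ})^{βᵢ-1} and f₂(x) = Σᵢ p*ᵢ α*ᵢβ*ᵢ (1+x)^{-(α*ᵢ+1)}(1 - (1+x)^{-α*ᵢ})^{β*ᵢ-1}. Equivalently, the first mixture dominates the second in the likelihood ratio order. -/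
open Finset

private lemma convexOn_exp_neg : ConvexOn ℝ Set.univ (fun y : ℝ => Real.exp (-y)) := by
  refine ⟨convex_univ, fun x _ y _ c d hc hd hcd => ?_⟩
  have h := convexOn_exp.2 (Set.mem_univ (-x)) (Set.mem_univ (-y)) hc hd hcd
  simpa [smul_eq_mul, mul_neg, neg_add, add_comm] using h

/-- `a / (1 - x^(-a))` is monotone in `a`, in product form. -/
private lemma rpow_psi {x a a' : ℝ} (hx : 1 < x) (ha : 0 < a) (haa : a ≤ a') :
    a * (1 - x ^ (-a')) ≤ a' * (1 - x ^ (-a)) := by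
  have hx0 : (0 : ℝ) < x := lt_trans one_pos hx
  have hL : 0 < Real.log x := Real.log_pos hx
  have ha' : 0 < a' := lt_of_lt_of_le ha haa
  have hsec := convexOn_exp_neg.secant_mono (Set.mem_univ (0 : ℝ))
    (Set.mem_univ (a * Real.log x)) (Set.mem_univ (a' * Real.log x))
    (ne_of_gt (by positivity)) (ne_of_gt (by positivity))
    (by nlinarith)
  simp only [neg_zero, Real.exp_zero, sub_zero] at hsec
  rw [div_le_div_iff₀ (by positivity) (by positivity)] at hsec
  have e1 : x ^ (-a) = Real.exp (-(a * Real.log x)) := by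
    rw [Real.rpow_def_of_pos hx0]; ring_nf
  have e2 : x ^ (-a') = Real.exp (-(a' * Real.log x)) := by
    rw [Real.rpow_def_of_pos hx0]; ring_nf
  rw [e1, e2]
  have key : a * (1 - Real.exp (-(a' * Real.log x))) * Real.log x ≤
      a' * (1 - Real.exp (-(a * Real.log x))) * Real.log x := by nlinarith [hsec]
  exact le_of_mul_le_mul_right key hL

private noncomputable def Fik (a a' b b' : ℝ) (s : ℝ) : ℝ :=
  (a' - a) * Real.log s + (b - 1) * Real.log (1 - s ^ (-a))
    - (b' - 1) * Real.log (1 - s ^ (-a'))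

private lemma one_sub_rpow_pos {x c : ℝ} (hx : 1 < x) (hc : 0 < c) :
    0 < 1 - x ^ (-c) := by
  have := Real.rpow_lt_one_of_one_lt_of_neg hx (by linarith : -c < 0)
  linarith

private lemma hasDerivAt_Fik (a a' b b' : ℝ) (ha : 0 < a) (ha' : 0 < a') {x : ℝ}
    (hx : 1 < x) :
    HasDerivAt (Fik a a' b b')
      ((a' - a) * x⁻¹ + (b - 1) * (a * x ^ (-a - 1) / (1 - x ^ (-a)))
        - (b' - 1) * (a' * x ^ (-a' - 1) / (1 - x ^ (-a')))) x := by
  have hx0 : (0 : ℝ) < x := lt_trans one_pos hx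
  have hP : 0 < 1 - x ^ (-a) := one_sub_rpow_pos hx ha
  have hQ : 0 < 1 - x ^ (-a') := one_sub_rpow_pos hx ha'
  have h1 : HasDerivAt (fun s : ℝ => s ^ (-a)) (-a * x ^ (-a - 1)) x :=
    Real.hasDerivAt_rpow_const (Or.inl hx0.ne')
  have h1' : HasDerivAt (fun s : ℝ => s ^ (-a')) (-a' * x ^ (-a' - 1)) x :=
    Real.hasDerivAt_rpow_const (Or.inl hx0.ne')
  have h2 : HasDerivAt (fun s : ℝ => 1 - s ^ (-a)) (a * x ^ (-a - 1)) x := by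
    simpa using h1.const_sub 1
  have h2' : HasDerivAt (fun s : ℝ => 1 - s ^ (-a')) (a' * x ^ (-a' - 1)) x := by
    simpa using h1'.const_sub 1
  have h3 : HasDerivAt (fun s : ℝ => Real.log (1 - s ^ (-a)))
      (a * x ^ (-a - 1) / (1 - x ^ (-a))) x := h2.log hP.ne'
  have h3' : HasDerivAt (fun s : ℝ => Real.log (1 - s ^ (-a')))
      (a' * x ^ (-a' - 1) / (1 - x ^ (-a'))) x := h2'.log hQ.ne'
  have hlog : HasDerivAt Real.log x⁻¹ x := Real.hasDerivAt_log hx0.ne'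
  exact ((hlog.const_mul (a' - a)).add (h3.const_mul (b - 1))).sub (h3'.const_mul (b' - 1))

private lemma Fik_mono {a a' b b' : ℝ} (ha : 0 < a) (ha' : 0 < a') (hb : 0 < b)
    (hb' : 0 < b') (haa : a ≤ a') (hab : a' * b' ≤ a * b) :
    MonotoneOn (Fik a a' b b') (Set.Ioi 1) := by
  apply monotoneOn_of_deriv_nonneg (convex_Ioi 1)
  · intro x hx
    exact (hasDerivAt_Fik a a' b b' ha ha' hx).continuousAt.continuousWithinAt
  · rw [interior_Ioi]
    intro x hx
    exact (hasDerivAt_Fik a a' b b' ha ha' hx).differentiableAt.differentiableWithinAt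
  · rw [interior_Ioi]
    intro x hx
    have hx1 : (1 : ℝ) < x := hx
    have hx0 : (0 : ℝ) < x := lt_trans one_pos hx1
    rw [(hasDerivAt_Fik a a' b b' ha ha' hx1).deriv]
    have hP : 0 < 1 - x ^ (-a) := one_sub_rpow_pos hx1 ha
    have hQ : 0 < 1 - x ^ (-a') := one_sub_rpow_pos hx1 ha'
    have hu0 : 0 < x ^ (-a) := Real.rpow_pos_of_pos hx0 _
    have hv0 : 0 < x ^ (-a') := Real.rpow_pos_of_pos hx0 _
    have hvu : x ^ (-a') ≤ x ^ (-a) :=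
      Real.rpow_le_rpow_of_exponent_le hx1.le (by linarith)
    have ineq1 : a * (1 - x ^ (-a')) ≤ a' * (1 - x ^ (-a)) := rpow_psi hx1 ha haa
    have ineq2 : a' * b' * (x ^ (-a') * (1 - x ^ (-a))) ≤
        a * b * (x ^ (-a) * (1 - x ^ (-a'))) := by
      have h4 : x ^ (-a') * (1 - x ^ (-a)) ≤ x ^ (-a) * (1 - x ^ (-a')) := by nlinarith
      have h5 : 0 ≤ x ^ (-a') * (1 - x ^ (-a)) := by positivity
      calc a' * b' * (x ^ (-a') * (1 - x ^ (-a)))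
          ≤ a * b * (x ^ (-a') * (1 - x ^ (-a))) := mul_le_mul_of_nonneg_right hab h5
        _ ≤ a * b * (x ^ (-a) * (1 - x ^ (-a'))) :=
            mul_le_mul_of_nonneg_left h4 (by positivity)
    have key : 0 ≤ (a' - a) * (1 - x ^ (-a)) * (1 - x ^ (-a')) +
        (b - 1) * (a * x ^ (-a)) * (1 - x ^ (-a')) -
        (b' - 1) * (a' * x ^ (-a')) * (1 - x ^ (-a)) := by nlinarith [ineq1, ineq2]
    have hxa1 : x ^ (-a - 1) = x ^ (-a) * x⁻¹ := by
      rw [show -a - 1 = -a + -1 by ring, Real.rpow_add hx0, Real.rpow_neg_one]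
    have hxa'1 : x ^ (-a' - 1) = x ^ (-a') * x⁻¹ := by
      rw [show -a' - 1 = -a' + -1 by ring, Real.rpow_add hx0, Real.rpow_neg_one]
    rw [hxa1, hxa'1]
    have hrw : (a' - a) * x⁻¹ + (b - 1) * (a * (x ^ (-a) * x⁻¹) / (1 - x ^ (-a)))
        - (b' - 1) * (a' * (x ^ (-a') * x⁻¹) / (1 - x ^ (-a')))
        = ((a' - a) * (1 - x ^ (-a)) * (1 - x ^ (-a')) +
            (b - 1) * (a * x ^ (-a)) * (1 - x ^ (-a')) -
            (b' - 1) * (a' * x ^ (-a')) * (1 - x ^ (-a))) /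
          ((1 - x ^ (-a)) * (1 - x ^ (-a'))) * x⁻¹ := by
      field_simp
    rw [hrw]
    exact mul_nonneg (div_nonneg key (by positivity)) (inv_nonneg.2 hx0.le)

private lemma core_prod {a a' b b' : ℝ} (ha : 0 < a) (ha' : 0 < a') (hb : 0 < b)
    (hb' : 0 < b') (haa : a ≤ a') (hab : a' * b' ≤ a * b) {s t : ℝ}
    (hs : 1 < s) (hst : s ≤ t) :
    s ^ (-(a + 1)) * (1 - s ^ (-a)) ^ (b - 1) * (t ^ (-(a' + 1)) * (1 - t ^ (-a')) ^ (b' - 1)) ≤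
    t ^ (-(a + 1)) * (1 - t ^ (-a)) ^ (b - 1) *
      (s ^ (-(a' + 1)) * (1 - s ^ (-a')) ^ (b' - 1)) := by
  have ht : 1 < t := lt_of_lt_of_le hs hst
  have hs0 : (0 : ℝ) < s := lt_trans one_pos hs
  have ht0 : (0 : ℝ) < t := lt_trans one_pos ht
  have hPs : 0 < 1 - s ^ (-a) := one_sub_rpow_pos hs ha
  have hQs : 0 < 1 - s ^ (-a') := one_sub_rpow_pos hs ha'
  have hPt : 0 < 1 - t ^ (-a) := one_sub_rpow_pos ht ha
  have hQt : 0 < 1 - t ^ (-a') := one_sub_rpow_pos ht ha'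
  have hL : 0 < s ^ (-(a + 1)) * (1 - s ^ (-a)) ^ (b - 1) *
      (t ^ (-(a' + 1)) * (1 - t ^ (-a')) ^ (b' - 1)) := by positivity
  have hR : 0 < t ^ (-(a + 1)) * (1 - t ^ (-a)) ^ (b - 1) *
      (s ^ (-(a' + 1)) * (1 - s ^ (-a')) ^ (b' - 1)) := by positivity
  have hF := Fik_mono ha ha' hb hb' haa hab (Set.mem_Ioi.2 hs) (Set.mem_Ioi.2 ht) hst
  simp only [Fik] at hF
  have hlog2 : ∀ z : ℝ, 1 < z → ∀ c d : ℝ, 0 < c →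
      Real.log (z ^ (-(c + 1)) * (1 - z ^ (-c)) ^ (d - 1)) =
        (-(c + 1)) * Real.log z + (d - 1) * Real.log (1 - z ^ (-c)) := by
    intro z hz c d hc
    have hz0 : (0 : ℝ) < z := lt_trans one_pos hz
    have h1 : 0 < 1 - z ^ (-c) := one_sub_rpow_pos hz hc
    rw [Real.log_mul (by positivity) (by positivity), Real.log_rpow hz0,
      Real.log_rpow h1]
  have eL : Real.log (s ^ (-(a + 1)) * (1 - s ^ (-a)) ^ (b - 1) *
      (t ^ (-(a' + 1)) * (1 - t ^ (-a')) ^ (b' - 1))) =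
      (-(a + 1)) * Real.log s + (b - 1) * Real.log (1 - s ^ (-a)) +
        ((-(a' + 1)) * Real.log t + (b' - 1) * Real.log (1 - t ^ (-a'))) := by
    rw [Real.log_mul (by positivity) (by positivity), hlog2 s hs a b ha,
      hlog2 t ht a' b' ha']
  have eR : Real.log (t ^ (-(a + 1)) * (1 - t ^ (-a)) ^ (b - 1) *
      (s ^ (-(a' + 1)) * (1 - s ^ (-a')) ^ (b' - 1))) =
      (-(a + 1)) * Real.log t + (b - 1) * Real.log (1 - t ^ (-a)) +
        ((-(a' + 1)) * Real.log s + (b' - 1) * Real.log (1 - s ^ (-a'))) := by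
    rw [Real.log_mul (by positivity) (by positivity), hlog2 t ht a b ha,
      hlog2 s hs a' b' ha']
  rw [← Real.log_le_log_iff hL hR, eL, eR]
  linarith [hF]

theorem ik_mixture_lr_order (n : ℕ) (hn : 1 ≤ n)
    (p pstar α αstar β βstar : Fin n → ℝ)
    (hp : ∀ i, 0 < p i) (hps : ∀ i, 0 < pstar i)
    (hα : ∀ i, 0 < α i) (hαs : ∀ i, 0 < αstar i)
    (hβ : ∀ i, 0 < β i) (hβs : ∀ i, 0 < βstar i)
    (hαcond : ∀ i j, α i ≤ αstar j)
    (hαβcond : ∀ i j, αstar j * βstar j ≤ α i * β i) :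
    MonotoneOn (fun x : ℝ =>
      (∑ i, p i * (α i * β i) * (1 + x) ^ (-(α i + 1)) *
          (1 - (1 + x) ^ (-(α i))) ^ (β i - 1)) /
        (∑ i, pstar i * (αstar i * βstar i) * (1 + x) ^ (-(αstar i + 1)) *
          (1 - (1 + x) ^ (-(αstar i))) ^ (βstar i - 1)))
      (Set.Ioi (0 : ℝ)) := by
  intro x hx y hy hxy
  simp only [Set.mem_Ioi] at hx hy
  have hden : ∀ z : ℝ, 0 < z →
      0 < ∑ i, pstar i * (αstar i * βstar i) * (1 + z) ^ (-(αstar i + 1)) *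
        (1 - (1 + z) ^ (-(αstar i))) ^ (βstar i - 1) := by
    intro z hz
    apply Finset.sum_pos _ ⟨⟨0, by omega⟩, Finset.mem_univ _⟩
    intro i _
    have h1z : (1 : ℝ) < 1 + z := by linarith
    have h1 : 0 < 1 - (1 + z) ^ (-(αstar i)) := one_sub_rpow_pos h1z (hαs i)
    have := hps i
    have := hαs i
    have := hβs i
    positivity
  simp only
  rw [div_le_div_iff₀ (hden x hx) (hden y hy), Finset.sum_mul_sum, Finset.sum_mul_sum]
  refine Finset.sum_le_sum fun i _ => Finset.sum_le_sum fun j _ => ?_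
  have hcore := core_prod (hα i) (hαs j) (hβ i) (hβs j) (hαcond i j) (hαβcond i j)
    (s := 1 + x) (t := 1 + y) (by linarith) (by linarith)
  have hC : 0 ≤ p i * (α i * β i) * (pstar j * (αstar j * βstar j)) := by
    have := hp i; have := hps j; have := hα i; have := hαs j
    have := hβ i; have := hβs j
    positivity
  nlinarith [mul_le_mul_of_nonneg_left hcore hC]
end
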